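/- arXiv:2504.19812 — 3 statements merged into one kernel-verified Lean document; each statement's English description precedes it below -/
import Mathlib

section
/- Let A_ℓ = [I_{n_u} I_{n_u} ⊗ z_ℓᵀ M_z] ∈ ℝ^{n_u × n_θ} with n_θ = n_u(n_z+1), where M_z is symmetric positive definite. If z_1,…,z_N ∈ ℝ^{n_z} are linearly independent with N ≤ n_z, then the stacked matrix A = [A_1; A_2; …; A_N] ∈ ℝ^{n_u N × n_θ} has full row rank n_u N. -/
open Matrix

/-!
Only the `I ⊗ zₗᵀ M_z` block matters. Its rows are `eᵢ ⊗ wₗ` with `wₗ = zₗᵀ M_z`; the `wₗ` are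
linearly independent because `M_z` is invertible, and a linear relation among the rows `eᵢ ⊗ wₗ`
splits, for each `i`, into a linear relation among the `wₗ`. Linear independence of the rows of a
column block of `A` gives that of the rows of `A`, so `A` has full row rank.
-/

theorem LinearIndependent.vecMul_of_isUnit {R ι m : Type*} [CommRing R] [Fintype m]
    [DecidableEq m] {z : ι → m → R} (hz : LinearIndependent R z) {M : Matrix m m R}
    (hM : IsUnit M) : LinearIndependent R (fun ℓ => z ℓ ᵥ* M) :=
  hz.map' M.vecMulLinear (LinearMap.ker_eq_bot.mpr (vecMul_injective_of_isUnit hM))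

theorem linearIndependent_one_kronecker_rows {R ι n κ : Type*} [CommRing R] [Fintype ι]
    [Fintype n] [DecidableEq n] {w : ι → κ → R} (hw : LinearIndependent R w) :
    LinearIndependent R
      (fun p : ι × n => fun q : n × κ => (1 : Matrix n n R) p.2 q.1 * w p.1 q.2) := by
  rw [Fintype.linearIndependent_iff] at hw ⊢
  rintro c hc ⟨ℓ, i⟩
  have hrel : ∑ ℓ', c (ℓ', i) • w ℓ' = 0 := by
    funext k
    simpa [Fintype.sum_prod_type, one_apply] using congrFun hc (i, k)
  exact hw (fun ℓ' => c (ℓ', i)) hrel ℓ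

theorem stacked_discrepancy_matrix_full_row_rank_general
    (nu nz N : ℕ)
    (Mz : Matrix (Fin nz) (Fin nz) ℝ) (hMz : Mz.PosDef)
    (z : Fin N → (Fin nz → ℝ)) (hz : LinearIndependent ℝ z)
    (A : Matrix (Fin N × Fin nu) (Fin nu ⊕ Fin nu × Fin nz) ℝ)
    (hA' : ∀ ℓ i j k,
      A (ℓ, i) (Sum.inr (j, k)) =
        (1 : Matrix (Fin nu) (Fin nu) ℝ) i j * Matrix.vecMul (z ℓ) Mz k) :
    A.rank = nu * N := by
  have hw : LinearIndependent ℝ (fun ℓ => z ℓ ᵥ* Mz) := hz.vecMul_of_isUnit hMz.isUnit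
  have hblock : LinearIndependent ℝ (fun r => A r ∘ Sum.inr) := by
    have hA_inr : (fun r => A r ∘ Sum.inr) =
        fun p q => (1 : Matrix (Fin nu) (Fin nu) ℝ) p.2 q.1 * (z p.1 ᵥ* Mz) q.2 := by
      ext ⟨ℓ, i⟩ ⟨j, k⟩
      exact hA' ℓ i j k
    rw [hA_inr]
    exact linearIndependent_one_kronecker_rows (n := Fin nu) (w := fun ℓ => z ℓ ᵥ* Mz) hw
  have hrows : LinearIndependent ℝ A := hblock.of_comp (LinearMap.funLeft ℝ ℝ Sum.inr)
  rw [hrows.rank_matrix, Fintype.card_prod, Fintype.card_fin, Fintype.card_fin, mul_comm]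

/-- the stacked matrix A = [A_1; …; A_N], with
A_ℓ = [I_{n_u}  I_{n_u} ⊗ z_ℓᵀ M_z], has full row rank n_u * N when
z_1, …, z_N are linearly independent and N ≤ n_z. -/
theorem stacked_discrepancy_matrix_full_row_rank
    (nu nz N : ℕ)
    (Mz : Matrix (Fin nz) (Fin nz) ℝ) (hMz : Mz.PosDef)
    (z : Fin N → (Fin nz → ℝ)) (hz : LinearIndependent ℝ z) (hN : N ≤ nz)
    (A : Matrix (Fin N × Fin nu) (Fin nu ⊕ Fin nu × Fin nz) ℝ)
    (hA : ∀ ℓ i j, A (ℓ, i) (Sum.inl j) = (1 : Matrix (Fin nu) (Fin nu) ℝ) i j)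
    (hA' : ∀ ℓ i j k,
      A (ℓ, i) (Sum.inr (j, k)) =
        (1 : Matrix (Fin nu) (Fin nu) ℝ) i j * Matrix.vecMul (z ℓ) Mz k) :
    A.rank = nu * N :=
  stacked_discrepancy_matrix_full_row_rank_general nu nz N Mz hMz z hz A hA'
end

section
/- Let W_θ be the block matrix [[W_u, W_u ⊗ z̃ᵀM_z], [W_u ⊗ M_z z̃, W_u ⊗ (W_z + M_z z̃ z̃ᵀ M_z)]] where W_u ∈ ℝ^{n_u × n_u} and W_z ∈ ℝ^{n_z × n_z} are symmetric positive definite, M_z ∈ ℝ^{n_z × n_z} is symmetric positive definite, and z̃ ∈ ℝ^{n_z}. Then W_θ is invertible with inverse given by the block matrix [[(1 + z̃ᵀ M_z W_z^{-1} M_z z̃) W_u^{-1}, W_u^{-1} ⊗ (−z̃ᵀ M_z W_z^{-1})], [W_u^{-1} ⊗ (−W_z^{-1} M_z z̃), W_u^{-1} ⊗ W_z^{-1}]]. -/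
open Matrix Kronecker

/-- the block matrix
`W_θ = [[W_u, W_u ⊗ z̃ᵀM_z], [W_u ⊗ M_z z̃, W_u ⊗ (W_z + M_z z̃ z̃ᵀ M_z)]]`
is invertible with inverse
`[[(1 + z̃ᵀ M_z W_z⁻¹ M_z z̃) W_u⁻¹, W_u⁻¹ ⊗ (−z̃ᵀ M_z W_z⁻¹)],
  [W_u⁻¹ ⊗ (−W_z⁻¹ M_z z̃), W_u⁻¹ ⊗ W_z⁻¹]]`. -/
theorem prior_precision_block_inverse
    (nu nz : ℕ)
    (Wu : Matrix (Fin nu) (Fin nu) ℝ) (hWu : Wu.PosDef)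
    (Wz Mz : Matrix (Fin nz) (Fin nz) ℝ) (hWz : Wz.PosDef) (hMz : Mz.PosDef)
    (zt : Fin nz → ℝ)
    (Wθ Winv : Matrix (Fin nu ⊕ Fin nu × Fin nz) (Fin nu ⊕ Fin nu × Fin nz) ℝ)
    (hWθ : Wθ = Matrix.fromBlocks
      Wu
      (Matrix.of fun i (jk : Fin nu × Fin nz) =>
        Wu i jk.1 * Matrix.vecMul zt Mz jk.2)
      (Matrix.of fun (ik : Fin nu × Fin nz) j =>
        Wu ik.1 j * Mz.mulVec zt ik.2)
      (Wu ⊗ₖ (Wz + Matrix.vecMulVec (Mz.mulVec zt) (Matrix.vecMul zt Mz))))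
    (hWinv : Winv = Matrix.fromBlocks
      ((1 + Matrix.vecMul zt Mz ⬝ᵥ Wz⁻¹.mulVec (Mz.mulVec zt)) • Wu⁻¹)
      (Matrix.of fun i (jk : Fin nu × Fin nz) =>
        Wu⁻¹ i jk.1 * (- Matrix.vecMul (Matrix.vecMul zt Mz) Wz⁻¹ jk.2))
      (Matrix.of fun (ik : Fin nu × Fin nz) j =>
        Wu⁻¹ ik.1 j * (- Wz⁻¹.mulVec (Mz.mulVec zt) ik.2))
      (Wu⁻¹ ⊗ₖ Wz⁻¹)) :
    Wθ * Winv = 1 ∧ Winv * Wθ = 1 := by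
  -- symmetry facts
  have hMzT : Mzᵀ = Mz := by
    rw [← Matrix.conjTranspose_eq_transpose_of_trivial]; exact hMz.1
  have hWzT : Wzᵀ = Wz := by
    rw [← Matrix.conjTranspose_eq_transpose_of_trivial]; exact hWz.1
  have hWzinvT : (Wz⁻¹)ᵀ = Wz⁻¹ := by
    rw [Matrix.transpose_nonsing_inv, hWzT]
  set a : Fin nz → ℝ := Mz.mulVec zt with ha
  have hbz : Matrix.vecMul zt Mz = a := by
    rw [← hMzT, Matrix.vecMul_transpose]
  set v : Fin nz → ℝ := Wz⁻¹.mulVec a with hv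
  have hsv : Matrix.vecMul a Wz⁻¹ = v := by
    rw [← hWzinvT, Matrix.vecMul_transpose]
  set c : ℝ := a ⬝ᵥ v with hc
  have hcs : (∑ m, a m * v m) = c := rfl
  -- invertibility scalar facts
  have hud : IsUnit Wu.det := (Matrix.isUnit_iff_isUnit_det _).mp hWu.isUnit
  have hzd : IsUnit Wz.det := (Matrix.isUnit_iff_isUnit_det _).mp hWz.isUnit
  have hu : ∀ i j, (∑ k, Wu i k * Wu⁻¹ k j) = (1 : Matrix (Fin nu) (Fin nu) ℝ) i j := by
    intro i j
    rw [← Matrix.mul_apply, Matrix.mul_nonsing_inv _ hud]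
  have hz : ∀ k m, (∑ m', Wz k m' * Wz⁻¹ m' m) = (1 : Matrix (Fin nz) (Fin nz) ℝ) k m := by
    intro k m
    rw [← Matrix.mul_apply, Matrix.mul_nonsing_inv _ hzd]
  have hzv : ∀ k, (∑ m, Wz k m * v m) = a k := by
    intro k
    have h : Wz.mulVec v = a := by
      rw [hv, Matrix.mulVec_mulVec, Matrix.mul_nonsing_inv _ hzd, Matrix.one_mulVec]
    simpa [Matrix.mulVec, dotProduct] using congrFun h k
  have hsv' : ∀ m, (∑ m', a m' * Wz⁻¹ m' m) = v m := by
    intro m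
    simpa [Matrix.vecMul, dotProduct] using congrFun hsv m
  have key : ∀ (f h : Fin nu → ℝ) (g l : Fin nz → ℝ),
      (∑ p : Fin nu × Fin nz, (f p.1 * g p.2) * (h p.1 * l p.2))
        = (∑ k, f k * h k) * (∑ m, g m * l m) := by
    intro f h g l
    rw [Fintype.sum_prod_type, Finset.sum_mul_sum]
    exact Finset.sum_congr rfl fun i _ => Finset.sum_congr rfl fun j _ => by ring
  subst hWθ hWinv
  rw [hbz, hsv]
  suffices h : (Matrix.fromBlocks
      Wu
      (Matrix.of fun i (jk : Fin nu × Fin nz) => Wu i jk.1 * a jk.2)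
      (Matrix.of fun (ik : Fin nu × Fin nz) j => Wu ik.1 j * a ik.2)
      (Wu ⊗ₖ (Wz + Matrix.vecMulVec a a))) *
    (Matrix.fromBlocks
      ((1 + c) • Wu⁻¹)
      (Matrix.of fun i (jk : Fin nu × Fin nz) => Wu⁻¹ i jk.1 * (- v jk.2))
      (Matrix.of fun (ik : Fin nu × Fin nz) j => Wu⁻¹ ik.1 j * (- v ik.2))
      (Wu⁻¹ ⊗ₖ Wz⁻¹)) = 1 by
    exact ⟨h, mul_eq_one_comm.mp h⟩
  rw [Matrix.fromBlocks_multiply, ← Matrix.fromBlocks_one, Matrix.fromBlocks_inj]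
  refine ⟨?_, ?_, ?_, ?_⟩
  · -- block (1,1)
    ext i j
    rw [Matrix.add_apply, Matrix.mul_apply, Matrix.mul_apply]
    simp only [Matrix.of_apply, Matrix.smul_apply, smul_eq_mul]
    have t1 : (∑ k, Wu i k * ((1 + c) * Wu⁻¹ k j)) = (1 + c) * ∑ k, Wu i k * Wu⁻¹ k j := by
      rw [Finset.mul_sum]; exact Finset.sum_congr rfl fun k _ => by ring
    have t2 : (∑ p : Fin nu × Fin nz, Wu i p.1 * a p.2 * (Wu⁻¹ p.1 j * -v p.2))
        = (∑ k, Wu i k * Wu⁻¹ k j) * (∑ m, a m * -v m) :=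
      (Finset.sum_congr rfl fun p _ => by ring).trans
        (key (fun k => Wu i k) (fun k => Wu⁻¹ k j) a (fun m => -v m))
    have t3 : (∑ m, a m * -v m) = -c := by
      rw [← hcs, ← Finset.sum_neg_distrib]
      exact Finset.sum_congr rfl fun m _ => by ring
    rw [t1, t2, t3, hu i j]; ring
  · -- block (1,2)
    ext i q
    rw [Matrix.add_apply, Matrix.mul_apply, Matrix.mul_apply]
    simp only [Matrix.of_apply, Matrix.kroneckerMap_apply]
    have t1 : (∑ k, Wu i k * (Wu⁻¹ k q.1 * -v q.2))
        = (∑ k, Wu i k * Wu⁻¹ k q.1) * -v q.2 := by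
      rw [Finset.sum_mul]; exact Finset.sum_congr rfl fun k _ => by ring
    have t2 : (∑ p : Fin nu × Fin nz, Wu i p.1 * a p.2 * (Wu⁻¹ p.1 q.1 * Wz⁻¹ p.2 q.2))
        = (∑ k, Wu i k * Wu⁻¹ k q.1) * (∑ m, a m * Wz⁻¹ m q.2) :=
      (Finset.sum_congr rfl fun p _ => by ring).trans
        (key (fun k => Wu i k) (fun k => Wu⁻¹ k q.1) a (fun m => Wz⁻¹ m q.2))
    rw [t1, t2, hsv' q.2, Matrix.zero_apply]; ring
  · -- block (2,1)
    ext p j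
    rw [Matrix.add_apply, Matrix.mul_apply, Matrix.mul_apply]
    simp only [Matrix.of_apply, Matrix.kroneckerMap_apply, Matrix.smul_apply, smul_eq_mul,
      Matrix.add_apply, Matrix.vecMulVec_apply]
    have t1 : (∑ k, Wu p.1 k * a p.2 * ((1 + c) * Wu⁻¹ k j))
        = (1 + c) * a p.2 * ∑ k, Wu p.1 k * Wu⁻¹ k j := by
      rw [Finset.mul_sum]; exact Finset.sum_congr rfl fun k _ => by ring
    have t2 : (∑ q : Fin nu × Fin nz,
          Wu p.1 q.1 * (Wz p.2 q.2 + a p.2 * a q.2) * (Wu⁻¹ q.1 j * -v q.2))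
        = (∑ k, Wu p.1 k * Wu⁻¹ k j) * (∑ m, (Wz p.2 m + a p.2 * a m) * -v m) :=
      (Finset.sum_congr rfl fun q _ => by ring).trans
        (key (fun k => Wu p.1 k) (fun k => Wu⁻¹ k j)
          (fun m => Wz p.2 m + a p.2 * a m) (fun m => -v m))
    have t3 : (∑ m, (Wz p.2 m + a p.2 * a m) * -v m) = -(a p.2) - a p.2 * c := by
      have e : ∀ m, (Wz p.2 m + a p.2 * a m) * -v m
          = -(Wz p.2 m * v m) + a p.2 * -(a m * v m) := fun m => by ring
      rw [Finset.sum_congr rfl fun m _ => e m, Finset.sum_add_distrib,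
        Finset.sum_neg_distrib, ← Finset.mul_sum, Finset.sum_neg_distrib, hzv,
        show (∑ m, a m * v m) = c from hcs]
      ring
    rw [t1, t2, t3, hu p.1 j, Matrix.zero_apply]; ring
  · -- block (2,2)
    ext p q
    rw [Matrix.add_apply, Matrix.mul_apply, Matrix.mul_apply]
    simp only [Matrix.of_apply, Matrix.kroneckerMap_apply, Matrix.add_apply,
      Matrix.vecMulVec_apply]
    have t1 : (∑ k, Wu p.1 k * a p.2 * (Wu⁻¹ k q.1 * -v q.2))
        = (∑ k, Wu p.1 k * Wu⁻¹ k q.1) * (a p.2 * -v q.2) := by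
      rw [Finset.sum_mul]; exact Finset.sum_congr rfl fun k _ => by ring
    have t2 : (∑ r : Fin nu × Fin nz,
          Wu p.1 r.1 * (Wz p.2 r.2 + a p.2 * a r.2) * (Wu⁻¹ r.1 q.1 * Wz⁻¹ r.2 q.2))
        = (∑ k, Wu p.1 k * Wu⁻¹ k q.1) * (∑ m, (Wz p.2 m + a p.2 * a m) * Wz⁻¹ m q.2) :=
      (Finset.sum_congr rfl fun r _ => by ring).trans
        (key (fun k => Wu p.1 k) (fun k => Wu⁻¹ k q.1)
          (fun m => Wz p.2 m + a p.2 * a m) (fun m => Wz⁻¹ m q.2))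
    have t3 : (∑ m, (Wz p.2 m + a p.2 * a m) * Wz⁻¹ m q.2)
        = (1 : Matrix (Fin nz) (Fin nz) ℝ) p.2 q.2 + a p.2 * v q.2 := by
      have e : ∀ m, (Wz p.2 m + a p.2 * a m) * Wz⁻¹ m q.2
          = Wz p.2 m * Wz⁻¹ m q.2 + a p.2 * (a m * Wz⁻¹ m q.2) := fun m => by ring
      rw [Finset.sum_congr rfl fun m _ => e m, Finset.sum_add_distrib,
        ← Finset.mul_sum, hz, hsv']
    have t4 : (1 : Matrix (Fin nu × Fin nz) (Fin nu × Fin nz) ℝ) p q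
        = (1 : Matrix (Fin nu) (Fin nu) ℝ) p.1 q.1 * (1 : Matrix (Fin nz) (Fin nz) ℝ) p.2 q.2 := by
      rw [← Matrix.one_kronecker_one (α := ℝ) (m := Fin nu) (n := Fin nz)]
      rfl
    rw [t1, t2, t3, hu p.1 q.1, t4]; ring
end

section
/- Let W_θ^{-1} be the block matrix [[(1 + z̃ᵀ M_z W_z^{-1} M_z z̃) W_u^{-1}, W_u^{-1} ⊗ (−z̃ᵀ M_z W_z^{-1})], [W_u^{-1} ⊗ (−W_z^{-1} M_z z̃), W_u^{-1} ⊗ W_z^{-1}]] and M_θ = diag(M_u, M_u ⊗ M_z). Then the M_θ-weighted trace satisfies Tr(M_θ W_θ^{-1}) = (1 + z̃ᵀ M_z W_z^{-1} M_z z̃ + Tr(M_z W_z^{-1})) · Tr(M_u W_u^{-1}). -/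
open Matrix Kronecker

lemma trace_fromBlocks' {m n : Type*} [Fintype m] [Fintype n] [DecidableEq m] [DecidableEq n]
    (A : Matrix m m ℝ) (B : Matrix m n ℝ) (C : Matrix n m ℝ) (D : Matrix n n ℝ) :
    (Matrix.fromBlocks A B C D).trace = A.trace + D.trace := by
  simp [Matrix.trace, Fintype.sum_sum_type, Matrix.diag, Matrix.fromBlocks]

/-- the `M_θ`-weighted trace of the block covariance `W_θ⁻¹`
satisfies `Tr(M_θ W_θ⁻¹) = (1 + z̃ᵀ M_z W_z⁻¹ M_z z̃ + Tr(M_z W_z⁻¹)) Tr(M_u W_u⁻¹)`. -/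
theorem weighted_trace_of_prior_covariance
    (nu nz : ℕ)
    (Mu Wu : Matrix (Fin nu) (Fin nu) ℝ) (hMu : Mu.PosDef) (hWu : Wu.PosDef)
    (Mz Wz : Matrix (Fin nz) (Fin nz) ℝ) (hMz : Mz.PosDef) (hWz : Wz.PosDef)
    (zt : Fin nz → ℝ)
    (Winv Mθ : Matrix (Fin nu ⊕ Fin nu × Fin nz) (Fin nu ⊕ Fin nu × Fin nz) ℝ)
    (hWinv : Winv = Matrix.fromBlocks
      ((1 + Matrix.vecMul zt Mz ⬝ᵥ Wz⁻¹.mulVec (Mz.mulVec zt)) • Wu⁻¹)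
      (Matrix.of fun i (jk : Fin nu × Fin nz) =>
        Wu⁻¹ i jk.1 * (- Matrix.vecMul (Matrix.vecMul zt Mz) Wz⁻¹ jk.2))
      (Matrix.of fun (ik : Fin nu × Fin nz) j =>
        Wu⁻¹ ik.1 j * (- Wz⁻¹.mulVec (Mz.mulVec zt) ik.2))
      (Wu⁻¹ ⊗ₖ Wz⁻¹))
    (hMθ : Mθ = Matrix.fromBlocks Mu 0 0 (Mu ⊗ₖ Mz)) :
    (Mθ * Winv).trace =
      (1 + Matrix.vecMul zt Mz ⬝ᵥ Wz⁻¹.mulVec (Mz.mulVec zt) + (Mz * Wz⁻¹).trace) *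
        (Mu * Wu⁻¹).trace := by
  subst hWinv hMθ
  rw [Matrix.fromBlocks_multiply, trace_fromBlocks']
  simp only [Matrix.zero_mul, Matrix.mul_zero, add_zero, zero_add,
    Matrix.mul_smul, ← Matrix.mul_kronecker_mul, Matrix.trace_kronecker,
    Matrix.trace_smul, smul_eq_mul]
  ring
end
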